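/- Let Γ ⊆ Γ' be closed subspaces of a complex Hilbert space Ĥ, β = Γ' ∩ Γ^⊥, and let M be a closed subspace of Ĥ that is Fredholm with respect to (Γ,Γ'). Then for every closed subspace L ⊆ β, the pair (γ^{-1}(L), M) = (L + Γ, M) is a Fredholm pair of subspaces of Ĥ if and only if (L, γ_!M) is a Fredholm pair of subspaces of β. -/

import Mathlib

noncomputable section

open Classical in
/-- Orthogonal projection onto a closed (complete) submodule, as a continuous linear map
on the ambient space (defined to be `0` on non-complete submodules). -/
noncomputable def orthProj {W : Type*} [NormedAddCommGroup W] [InnerProductSpace ℂ W]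
    (M : Submodule ℂ W) : W →L[ℂ] W :=
  if h : IsComplete (M : Set W) then
    haveI : CompleteSpace M := h.completeSpace_coe
    M.subtypeL.comp (M.orthogonalProjectionOnto)
  else 0

/-- `(M, N)` is a Fredholm pair of subspaces of `W`: the sum is closed, the intersection
is finite-dimensional and the sum has finite codimension. -/
def FredholmPair {W : Type*} [NormedAddCommGroup W] [InnerProductSpace ℂ W]
    (M N : Submodule ℂ W) : Prop :=
  IsClosed ((M ⊔ N : Submodule ℂ W) : Set W) ∧
  FiniteDimensional ℂ ↥(M ⊓ N) ∧
  FiniteDimensional ℂ (W ⧸ (M ⊔ N))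

/-- `(M, N)` is a transversal pair of subspaces of `W`. -/
def TransversalPair {W : Type*} [NormedAddCommGroup W] [InnerProductSpace ℂ W]
    (M N : Submodule ℂ W) : Prop :=
  M ⊓ N = ⊥ ∧ M ⊔ N = ⊤

/-- `(L, N)` is a Fredholm pair of subspaces of the subspace `β` of `W` (the codimension
is computed inside `β`). -/
def FredholmPairIn {W : Type*} [NormedAddCommGroup W] [InnerProductSpace ℂ W]
    (β L N : Submodule ℂ W) : Prop :=
  IsClosed ((L ⊔ N : Submodule ℂ W) : Set W) ∧
  FiniteDimensional ℂ ↥(L ⊓ N) ∧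
  FiniteDimensional ℂ (↥β ⧸ Submodule.comap β.subtype (L ⊔ N))

/-- `(L, N)` is a transversal pair of subspaces of the subspace `β` of `W`. -/
def TransversalPairIn {W : Type*} [NormedAddCommGroup W] [InnerProductSpace ℂ W]
    (β L N : Submodule ℂ W) : Prop :=
  L ⊓ N = ⊥ ∧ L ⊔ N = β

/-- The push-forward `γ_!M = γ(M ∩ Γ')`, where `β = Γ' ∩ Γ^⊥` and `γ` is the restriction
to `Γ'` of the orthogonal projection onto `β`. -/
def gammaPush {W : Type*} [NormedAddCommGroup W] [InnerProductSpace ℂ W]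
    (Γ Γ' M : Submodule ℂ W) : Submodule ℂ W :=
  (M ⊓ Γ').map (orthProj (Γ' ⊓ Γᗮ) : W →ₗ[ℂ] W)

/-- `M` is Fredholm with respect to `(Γ, Γ')`: the pair `(M, Γ)` is lower semi-Fredholm
and the pair `(M, Γ')` is upper semi-Fredholm. -/
def FredholmWrt {W : Type*} [NormedAddCommGroup W] [InnerProductSpace ℂ W]
    (Γ Γ' M : Submodule ℂ W) : Prop :=
  (IsClosed ((M ⊔ Γ : Submodule ℂ W) : Set W) ∧ FiniteDimensional ℂ ↥(M ⊓ Γ)) ∧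
  (IsClosed ((M ⊔ Γ' : Submodule ℂ W) : Set W) ∧ FiniteDimensional ℂ (W ⧸ (M ⊔ Γ')))

/-- `M` is transversal to `(Γ, Γ')`: `M + Γ` is closed, `M ∩ Γ = 0` and `M + Γ' = W`. -/
def TransversalWrt {W : Type*} [NormedAddCommGroup W] [InnerProductSpace ℂ W]
    (Γ Γ' M : Submodule ℂ W) : Prop :=
  IsClosed ((M ⊔ Γ : Submodule ℂ W) : Set W) ∧ M ⊓ Γ = ⊥ ∧ M ⊔ Γ' = ⊤

private lemma fd_of_ker_range {K V V₂ : Type*} [Field K] [AddCommGroup V] [Module K V]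
    [AddCommGroup V₂] [Module K V₂] (f : V →ₗ[K] V₂)
    (h1 : FiniteDimensional K (LinearMap.ker f)) (h2 : FiniteDimensional K (LinearMap.range f)) :
    FiniteDimensional K V := by
  haveI := h1; haveI := h2
  obtain ⟨Q, hQ⟩ := Submodule.exists_isCompl (LinearMap.ker f)
  haveI : FiniteDimensional K (V ⧸ LinearMap.ker f) :=
    LinearEquiv.finiteDimensional f.quotKerEquivRange.symm
  haveI : FiniteDimensional K Q :=
    LinearEquiv.finiteDimensional (Submodule.quotientEquivOfIsCompl _ _ hQ)
  have hfin : FiniteDimensional K ↥(LinearMap.ker f ⊔ Q) := inferInstance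
  rw [hQ.sup_eq_top] at hfin
  exact LinearEquiv.finiteDimensional (Submodule.topEquiv (R := K) (M := V))

private lemma fd_quotient_of_sup_fd {K V : Type*} [Field K] [AddCommGroup V] [Module K V]
    (S F : Submodule K V) (hF : FiniteDimensional K F) (h : S ⊔ F = ⊤) :
    FiniteDimensional K (V ⧸ S) := by
  haveI := hF
  have hsurj : Function.Surjective (S.mkQ.comp F.subtype) := by
    intro x
    obtain ⟨v, rfl⟩ := Submodule.Quotient.mk_surjective S x
    have hv : v ∈ S ⊔ F := h ▸ Submodule.mem_top
    obtain ⟨s, hs, f, hf, rfl⟩ := Submodule.mem_sup.mp hv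
    refine ⟨⟨f, hf⟩, ?_⟩
    have : (s + f) - f ∈ S := by simpa using hs
    simpa [Submodule.mkQ_apply] using ((Submodule.Quotient.eq S).mpr this).symm
  exact Module.Finite.of_surjective (S.mkQ.comp F.subtype) hsurj

private lemma sum_closed_crux {W : Type*} [NormedAddCommGroup W] [NormedSpace ℂ W]
    [CompleteSpace W] (C B L' : Submodule ℂ W)
    (hC : IsClosed (C : Set W)) (hB : IsClosed (B : Set W))
    (hCB : IsClosed ((C ⊔ B : Submodule ℂ W) : Set W)) (hL' : IsClosed (L' : Set W))
    (hle : L' ≤ B) (hinf : C ⊓ B ≤ L') :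
    IsClosed ((C ⊔ L' : Submodule ℂ W) : Set W) := by
  haveI : CompleteSpace C := hC.completeSpace_coe
  haveI : CompleteSpace B := hB.completeSpace_coe
  haveI : CompleteSpace L' := hL'.completeSpace_coe
  haveI : CompleteSpace (C ⊔ B : Submodule ℂ W) := hCB.completeSpace_coe
  let gl : (↥C × ↥B) →ₗ[ℂ] ↥(C ⊔ B : Submodule ℂ W) :=
    { toFun := fun p => ⟨(p.1 : W) + p.2, Submodule.add_mem_sup p.1.2 p.2.2⟩
      map_add' := by intro p q; ext; simp [Prod.fst_add, Prod.snd_add]; abel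
      map_smul' := by intro c p; ext; simp [Prod.smul_fst, Prod.smul_snd, smul_add] }
  have gl_cont : Continuous gl := by
    apply Continuous.subtype_mk
    exact (continuous_subtype_val.comp continuous_fst).add
      (continuous_subtype_val.comp continuous_snd)
  let g : (↥C × ↥B) →L[ℂ] ↥(C ⊔ B : Submodule ℂ W) := ⟨gl, gl_cont⟩
  have gsurj : Function.Surjective g := by
    rintro ⟨y, hy⟩
    obtain ⟨c, hc, b, hb, rfl⟩ := Submodule.mem_sup.mp hy
    exact ⟨(⟨c, hc⟩, ⟨b, hb⟩), rfl⟩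
  obtain ⟨K, K0, hK⟩ := g.exists_preimage_norm_le gsurj
  have key : ∀ x : W, x ∈ (C ⊔ L' : Submodule ℂ W) →
      ∃ c ∈ C, ∃ l ∈ L', c + l = x ∧ ‖c‖ ≤ K * ‖x‖ ∧ ‖l‖ ≤ K * ‖x‖ := by
    intro x hx
    have hx' : x ∈ (C ⊔ B : Submodule ℂ W) := sup_le_sup_left hle C hx
    obtain ⟨p, hp, hpnorm⟩ := hK ⟨x, hx'⟩
    have hpsum : (p.1 : W) + p.2 = x := congrArg Subtype.val hp
    obtain ⟨c0, hc0, l0, hl0, hx0⟩ := Submodule.mem_sup.mp hx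
    have hbl : (p.2 : W) ∈ L' := by
      have hdiff : (p.2 : W) - l0 ∈ C ⊓ B := by
        constructor
        · have : (p.2 : W) - l0 = c0 - p.1 := by
            have h3 : (p.1 : W) + p.2 = c0 + l0 := hpsum.trans hx0.symm
            rw [sub_eq_sub_iff_add_eq_add, add_comm]; exact h3
          rw [this]
          exact C.sub_mem hc0 p.1.2
        · exact B.sub_mem p.2.2 (hle hl0)
      have h2 : (p.2 : W) = ((p.2 : W) - l0) + l0 := (sub_add_cancel _ _).symm
      rw [h2]
      exact L'.add_mem (hinf hdiff) hl0
    have hnx : ‖(⟨x, hx'⟩ : ↥(C ⊔ B : Submodule ℂ W))‖ = ‖x‖ := rfl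
    refine ⟨p.1, p.1.2, p.2, hbl, hpsum, ?_, ?_⟩
    · exact le_trans (norm_fst_le p) (by rw [← hnx]; exact hpnorm)
    · exact le_trans (norm_snd_le p) (by rw [← hnx]; exact hpnorm)
  let f : NormedAddGroupHom (↥C × ↥L') W :=
    { toFun := fun p => (p.1 : W) + p.2
      map_add' := by intro p q; simp [Prod.fst_add, Prod.snd_add]; abel
      bound' := ⟨2, fun p => by
        calc ‖(p.1 : W) + p.2‖ ≤ ‖(p.1 : W)‖ + ‖(p.2 : W)‖ := norm_add_le _ _
        _ ≤ ‖p‖ + ‖p‖ := add_le_add (norm_fst_le p) (norm_snd_le p)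
        _ = 2 * ‖p‖ := by ring⟩ }
  have hyp : f.SurjectiveOnWith (C ⊔ L' : Submodule ℂ W).toAddSubgroup K := by
    intro x hx
    obtain ⟨c, hc, l, hl, hcl, hcn, hln⟩ := key x hx
    refine ⟨(⟨c, hc⟩, ⟨l, hl⟩), hcl, ?_⟩
    rw [Prod.norm_def]
    exact max_le hcn hln
  have hcl := controlled_closure_of_complete K0 one_pos hyp
  apply isClosed_of_closure_subset
  intro x hx
  have hx' : x ∈ (Submodule.toAddSubgroup (C ⊔ L')).topologicalClosure := hx
  obtain ⟨p, hfp, -⟩ := hcl x hx'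
  rw [← hfp]
  exact Submodule.add_mem_sup p.1.2 p.2.2

set_option maxHeartbeats 2000000 in
/-- with `β = Γ' ∩ Γ^⊥`, if `M` is Fredholm with respect to `(Γ, Γ')`, then
for every closed `L ⊆ β`, the pair `(L + Γ, M)` is a Fredholm pair of subspaces of `Ĥ`
iff `(L, γ_!M)` is a Fredholm pair of subspaces of `β`. -/
theorem statement_11
    {W : Type*} [NormedAddCommGroup W] [InnerProductSpace ℂ W] [CompleteSpace W]
    (Γ Γ' M : Submodule ℂ W)
    (hΓ : IsClosed ((Γ : Submodule ℂ W) : Set W))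
    (hΓ' : IsClosed ((Γ' : Submodule ℂ W) : Set W))
    (hle : Γ ≤ Γ')
    (hM : IsClosed ((M : Submodule ℂ W) : Set W))
    (hMF : FredholmWrt Γ Γ' M) :
    ∀ L : Submodule ℂ W, IsClosed ((L : Submodule ℂ W) : Set W) → L ≤ Γ' ⊓ Γᗮ →
      (FredholmPair (L ⊔ Γ) M ↔ FredholmPairIn (Γ' ⊓ Γᗮ) L (gammaPush Γ Γ' M)) := by
  intro L hLclosed hLle
  have hβclosed0 : IsClosed ((Γ' ⊓ Γᗮ : Submodule ℂ W) : Set W) := by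
    rw [Submodule.coe_inf]
    exact hΓ'.inter (Submodule.isClosed_orthogonal (K := Γ))
  haveI hΓcs : CompleteSpace Γ := hΓ.completeSpace_coe
  set β : Submodule ℂ W := Γ' ⊓ Γᗮ with hβ
  have hβclosed : IsClosed ((β : Submodule ℂ W) : Set W) := hβclosed0
  haveI hβcs : CompleteSpace β := hβclosed.completeSpace_coe
  set P : W →L[ℂ] W := orthProj β with hPdef
  set N : Submodule ℂ W := gammaPush Γ Γ' M with hNdef
  have hNmap : N = (M ⊓ Γ').map (P : W →ₗ[ℂ] W) := by rw [hNdef, hPdef, hβ]; rfl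
  have hPeq : P = β.subtypeL.comp (β.orthogonalProjectionOnto) := by
    rw [hPdef]; simp only [orthProj, dif_pos hβclosed.isComplete]
  have hPmem : ∀ x : W, P x ∈ β := fun x => by rw [hPeq]; exact (β.orthogonalProjectionOnto x).2
  have hPid : ∀ x ∈ β, P x = x := fun x hx => by
    rw [hPeq]; exact Submodule.starProjection_eq_self_iff.mpr hx
  have hβleΓorth : β ≤ Γᗮ := by rw [hβ]; exact inf_le_right
  have hβleΓ' : β ≤ Γ' := by rw [hβ]; exact inf_le_left
  have hΓle_orth : Γ ≤ βᗮ :=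
    le_trans (Submodule.le_orthogonal_orthogonal Γ) (Submodule.orthogonal_le hβleΓorth)
  have hPzero : ∀ x ∈ Γ, P x = 0 := fun x hx => by
    rw [hPeq]
    have h0 : β.orthogonalProjectionOnto x = 0 :=
      Submodule.orthogonalProjectionOnto_apply_of_mem_orthogonal (hΓle_orth hx)
    simp [ContinuousLinearMap.comp_apply, h0]
  have hΓβ : Γ ⊔ β = Γ' := by
    have h := Submodule.sup_orthogonal_inf_of_hasOrthogonalProjection (K₁ := Γ) (K₂ := Γ') hle
    rw [hβ, inf_comm Γ' Γᗮ]; exact h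
  have hPsub : ∀ x ∈ Γ', x - P x ∈ Γ := by
    intro x hx
    rw [← hΓβ] at hx
    obtain ⟨g, hg, b, hb, rfl⟩ := Submodule.mem_sup.mp hx
    have hPgb : P (g + b) = b := by rw [map_add, hPzero g hg, hPid b hb, zero_add]
    rw [hPgb, add_sub_cancel_right]
    exact hg
  have hNle_β : N ≤ β := by
    rw [hNmap]
    rintro x ⟨m, hm, rfl⟩
    exact hPmem m
  have hNle : N ≤ Γ ⊔ (M ⊓ Γ') := by
    rw [hNmap]
    rintro x ⟨m, hm, rfl⟩
    have h1 : m - P m ∈ Γ := hPsub m hm.2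
    have h2 : P m = m - (m - P m) := (sub_sub_cancel m (P m)).symm
    rw [show (P : W →ₗ[ℂ] W) m = P m from rfl, h2]
    exact Submodule.sub_mem _ ((le_sup_right : M ⊓ Γ' ≤ Γ ⊔ (M ⊓ Γ')) hm)
      ((le_sup_left : Γ ≤ Γ ⊔ (M ⊓ Γ')) h1)
  have hMΓ'le : M ⊓ Γ' ≤ Γ ⊔ N := by
    intro m hm
    have h1 : m - P m ∈ Γ := hPsub m hm.2
    have h2 : P m ∈ N := by rw [hNmap]; exact Submodule.mem_map_of_mem hm
    have h3 : m = (m - P m) + P m := (sub_add_cancel m (P m)).symm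
    rw [h3]
    exact Submodule.add_mem_sup h1 h2
  have hΓN : Γ ⊔ (M ⊓ Γ') = Γ ⊔ N :=
    le_antisymm (sup_le le_sup_left hMΓ'le) (sup_le le_sup_left hNle)
  have hLβ : L ≤ β := hLle
  have hLΓ'le : L ⊔ Γ ≤ Γ' := sup_le (hLβ.trans hβleΓ') hle
  have hL'β : L ⊔ N ≤ β := sup_le hLβ hNle_β
  have hNS : N ≤ (L ⊔ Γ) ⊔ M :=
    hNle.trans (sup_le (le_sup_right.trans le_sup_left) (inf_le_left.trans le_sup_right))
  have hΓΓorth : Γ ⊓ Γᗮ = ⊥ := Γ.orthogonal_disjoint.eq_bot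
  have hSΓ' : ((L ⊔ Γ) ⊔ M) ⊓ Γ' = (L ⊔ N) ⊔ Γ := by
    rw [sup_inf_assoc_of_le M hLΓ'le, sup_assoc, hΓN, sup_comm Γ N, ← sup_assoc]
  have hL'eq : ((L ⊔ N) ⊔ Γ) ⊓ Γᗮ = L ⊔ N := by
    rw [sup_inf_assoc_of_le Γ (hL'β.trans hβleΓorth), hΓΓorth, sup_bot_eq]
  have hβΓM : β ⊓ (Γ ⊔ M) = N := by
    apply le_antisymm
    · intro x hx
      rw [Submodule.mem_inf] at hx
      obtain ⟨hxβ, hxΓM⟩ := hx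
      obtain ⟨g, hg, m, hm, rfl⟩ := Submodule.mem_sup.mp hxΓM
      have hmΓ' : m ∈ Γ' := by
        have h4 : m = g + m - g := by rw [add_sub_cancel_left]
        rw [h4]
        exact Γ'.sub_mem (hβleΓ' hxβ) (hle hg)
      have hPx : P (g + m) = P m := by rw [map_add, hPzero g hg, zero_add]
      have h5 : g + m = P m := by rw [← hPx, hPid _ hxβ]
      rw [h5, hNmap]
      exact Submodule.mem_map_of_mem ⟨hm, hmΓ'⟩
    · exact le_inf hNle_β (hNle.trans (sup_le_sup_left inf_le_left Γ))
  have hβS : β ⊓ ((L ⊔ Γ) ⊔ M) = L ⊔ N := by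
    rw [sup_assoc, inf_comm β (L ⊔ (Γ ⊔ M)), sup_inf_assoc_of_le (Γ ⊔ M) hLβ,
      inf_comm (Γ ⊔ M) β, hβΓM]
  constructor
  · rintro ⟨hScl, hSint, hSquot⟩
    refine ⟨?_, ?_, ?_⟩
    · have heq : L ⊔ N = ((L ⊔ Γ) ⊔ M) ⊓ Γ' ⊓ Γᗮ := by rw [hSΓ', hL'eq]
      rw [heq, Submodule.coe_inf, Submodule.coe_inf]
      exact (hScl.inter hΓ').inter (Submodule.isClosed_orthogonal (K := Γ))
    · haveI := hSint
      have hmaple : L ⊓ N ≤ Submodule.map (P : W →ₗ[ℂ] W) ((L ⊔ Γ) ⊓ M) := by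
        intro x hx
        rw [Submodule.mem_inf] at hx
        obtain ⟨hxL, hxN⟩ := hx
        rw [hNmap] at hxN
        obtain ⟨m, hm, rfl⟩ := hxN
        have h1 : m - P m ∈ Γ := hPsub m hm.2
        have h2 : m ∈ L ⊔ Γ := by
          have h4 := Submodule.add_mem_sup hxL h1
          simpa using h4
        exact ⟨m, ⟨h2, hm.1⟩, rfl⟩
      exact Submodule.finiteDimensional_of_le hmaple
    · haveI := hSquot
      have hLNle : L ⊔ N ≤ (L ⊔ Γ) ⊔ M := sup_le (le_sup_left.trans le_sup_left) hNS
      have hKle : Submodule.comap β.subtype (L ⊔ N)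
          ≤ LinearMap.ker (((L ⊔ Γ) ⊔ M).mkQ.comp β.subtype) := by
        intro x hx
        rw [Submodule.mem_comap] at hx
        rw [LinearMap.mem_ker, LinearMap.comp_apply, Submodule.mkQ_apply,
          Submodule.Quotient.mk_eq_zero]
        exact hLNle hx
      have hker2 : LinearMap.ker (((L ⊔ Γ) ⊔ M).mkQ.comp β.subtype)
          ≤ Submodule.comap β.subtype (L ⊔ N) := by
        intro x hx
        rw [LinearMap.mem_ker, LinearMap.comp_apply, Submodule.mkQ_apply,
          Submodule.Quotient.mk_eq_zero] at hx
        have hx2 : (x : W) ∈ β ⊓ ((L ⊔ Γ) ⊔ M) := ⟨x.2, hx⟩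
        rw [hβS] at hx2
        exact hx2
      have hinj : Function.Injective ((Submodule.comap β.subtype (L ⊔ N)).liftQ
          ((((L ⊔ Γ) ⊔ M)).mkQ.comp β.subtype) hKle) := by
        rw [← LinearMap.ker_eq_bot]
        exact Submodule.ker_liftQ_eq_bot _ _ _ hker2
      exact FiniteDimensional.of_injective _ hinj
  · rintro ⟨hL'cl, hL'int, hL'quot⟩
    refine ⟨?_, ?_, ?_⟩
    · have hCclosed : IsClosed ((Γ ⊔ M : Submodule ℂ W) : Set W) := by
        rw [sup_comm Γ M]; exact hMF.1.1
      have hCBclosed : IsClosed (((Γ ⊔ M) ⊔ β : Submodule ℂ W) : Set W) := by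
        have h6 : (Γ ⊔ M) ⊔ β = M ⊔ Γ' := by
          rw [sup_comm Γ M, sup_assoc, hΓβ]
        rw [h6]; exact hMF.2.1
      have hinf : (Γ ⊔ M) ⊓ β ≤ L ⊔ N := by
        rw [inf_comm (Γ ⊔ M) β, hβΓM]
        exact le_sup_right
      have hres := sum_closed_crux (Γ ⊔ M) β (L ⊔ N) hCclosed hβclosed hCBclosed hL'cl hL'β hinf
      have hSeq : (Γ ⊔ M) ⊔ (L ⊔ N) = (L ⊔ Γ) ⊔ M := le_antisymm
        (sup_le (sup_le (le_sup_right.trans le_sup_left) le_sup_right)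
          (sup_le (le_sup_left.trans le_sup_left) hNS))
        (sup_le (sup_le (le_sup_left.trans le_sup_right) (le_sup_left.trans le_sup_left))
          (le_sup_right.trans le_sup_left))
      rw [hSeq] at hres
      exact hres
    · haveI := hL'int
      haveI := hMF.1.2
      let φ : ↥((L ⊔ Γ) ⊓ M) →ₗ[ℂ] W := (P : W →ₗ[ℂ] W).comp ((L ⊔ Γ) ⊓ M).subtype
      have hrange : LinearMap.range φ ≤ L ⊓ N := by
        rintro x ⟨d, rfl⟩
        have hd := d.2
        rw [Submodule.mem_inf] at hd
        obtain ⟨hdLΓ, hdM⟩ := hd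
        have hdΓ' : (d : W) ∈ Γ' := hLΓ'le hdLΓ
        rw [Submodule.mem_inf]
        constructor
        · obtain ⟨l, hl, g, hg, hlg⟩ := Submodule.mem_sup.mp hdLΓ
          have h7 : P (d : W) = l := by
            rw [← hlg, map_add, hPid l (hLβ hl), hPzero g hg, add_zero]
          have h8 : φ d = P (d : W) := rfl
          rw [h8, h7]
          exact hl
        · have h8 : φ d = P (d : W) := rfl
          rw [h8, hNmap]
          exact Submodule.mem_map_of_mem ⟨hdM, hdΓ'⟩
      haveI hr : FiniteDimensional ℂ (LinearMap.range φ) :=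
        Submodule.finiteDimensional_of_le hrange
      let ψ : ↥(LinearMap.ker φ) →ₗ[ℂ] ↥(M ⊓ Γ) :=
        LinearMap.codRestrict (M ⊓ Γ)
          ((((L ⊔ Γ) ⊓ M).subtype).comp (LinearMap.ker φ).subtype) (fun x => by
            have hx2 : φ x.1 = 0 := x.2
            have hD2 := x.1.2
            rw [Submodule.mem_inf] at hD2
            rw [Submodule.mem_inf]
            refine ⟨hD2.2, ?_⟩
            have h5 : ((x : ↥((L ⊔ Γ) ⊓ M)) : W) - P ((x : ↥((L ⊔ Γ) ⊓ M)) : W) ∈ Γ :=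
              hPsub _ (hLΓ'le hD2.1)
            have h6 : P ((x : ↥((L ⊔ Γ) ⊓ M)) : W) = 0 := hx2
            rwa [h6, sub_zero] at h5)
      have hψinj : Function.Injective ψ := by
        intro a b hab
        have h9 := congrArg (Subtype.val : ↥(M ⊓ Γ) → W) hab
        exact Subtype.ext (Subtype.ext h9)
      haveI hk : FiniteDimensional ℂ (LinearMap.ker φ) := FiniteDimensional.of_injective ψ hψinj
      exact fd_of_ker_range φ hk hr
    · haveI := hL'quot
      haveI := hMF.2.2
      obtain ⟨F1, hF1⟩ := Submodule.exists_isCompl (M ⊔ Γ')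
      haveI hF1fd : FiniteDimensional ℂ F1 :=
        LinearEquiv.finiteDimensional (Submodule.quotientEquivOfIsCompl _ _ hF1)
      obtain ⟨F2', hF2'⟩ := Submodule.exists_isCompl (Submodule.comap β.subtype (L ⊔ N))
      haveI hF2'fd : FiniteDimensional ℂ F2' :=
        LinearEquiv.finiteDimensional (Submodule.quotientEquivOfIsCompl _ _ hF2')
      have hβdecomp : (L ⊔ N) ⊔ F2'.map β.subtype = β := by
        have h1 : Submodule.comap β.subtype (L ⊔ N) ⊔ F2' = ⊤ := hF2'.sup_eq_top
        have h3 : Submodule.map β.subtype (Submodule.comap β.subtype (L ⊔ N)) = L ⊔ N := by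
          rw [Submodule.map_comap_subtype]
          exact inf_eq_right.mpr hL'β
        have h2 : Submodule.map β.subtype (Submodule.comap β.subtype (L ⊔ N) ⊔ F2')
            = Submodule.map β.subtype ⊤ := by rw [h1]
        rw [Submodule.map_sup, h3, Submodule.map_top, Submodule.range_subtype] at h2
        exact h2
      have hsup : ((L ⊔ Γ) ⊔ M) ⊔ (F2'.map β.subtype ⊔ F1) = ⊤ := by
        have hMle : M ≤ ((L ⊔ Γ) ⊔ M) ⊔ (F2'.map β.subtype ⊔ F1) :=
          le_sup_of_le_left le_sup_right
        have hF2le : F2'.map β.subtype ≤ ((L ⊔ Γ) ⊔ M) ⊔ (F2'.map β.subtype ⊔ F1) :=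
          le_sup_of_le_right le_sup_left
        have hF1le : F1 ≤ ((L ⊔ Γ) ⊔ M) ⊔ (F2'.map β.subtype ⊔ F1) :=
          le_sup_of_le_right le_sup_right
        have hLNle2 : L ⊔ N ≤ (L ⊔ Γ) ⊔ M :=
          sup_le (le_sup_of_le_left le_sup_left) hNS
        have hβle2 : β ≤ ((L ⊔ Γ) ⊔ M) ⊔ (F2'.map β.subtype ⊔ F1) :=
          hβdecomp.symm.trans_le (sup_le (hLNle2.trans le_sup_left) hF2le)
        have hΓle2 : Γ ≤ ((L ⊔ Γ) ⊔ M) ⊔ (F2'.map β.subtype ⊔ F1) :=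
          le_sup_of_le_left (le_sup_of_le_left le_sup_right)
        have hΓ'le2 : Γ' ≤ ((L ⊔ Γ) ⊔ M) ⊔ (F2'.map β.subtype ⊔ F1) := by
          rw [← hΓβ]
          exact sup_le hΓle2 hβle2
        rw [eq_top_iff, ← hF1.sup_eq_top]
        exact sup_le (sup_le hMle hΓ'le2) hF1le
      exact fd_quotient_of_sup_fd _ _ inferInstance hsup
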